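/- In the unidirectional maintenance scheduling problem, any job of maximal length is a splitting job: if P ⊆ 𝒫 and j ∈ J(P) satisfies p'_j ≥ p'_{j'} for all j' ∈ J(P), then for every X ∈ ℛ_j, every job in J(P∖X) lies in J_L(X,P) ∪ J_R(X,P). -/

import Mathlib

/-!
Let `X = [a, b]` be a possession of `j`, so `b - a + 1 = p j`. A job `j''` of `J(P \ X)` lying
in neither `J_L(X,P)` nor `J_R(X,P)` has a possession reaching past the right end of `X` and one
reaching past its left end, so its release date is before `a` and its deadline after `b`. Since
`p j'' ≤ p j`, the window `[b + 1 - p j'', b]` is then a possession of `j''` inside `X`, which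
cannot meet `P \ X`.
-/

open Finset
open scoped Classical

/-- Possession collection of job `j` in the unidirectional case: all intervals
`[ℓ_a, ℓ_{a+p'_j-1}]` with `r'_j ≤ a ≤ d'_j - p'_j + 1` (paths identified with
their integer indices). -/
noncomputable def poss {ι : Type*} (r d p : ι → ℤ) (j : ι) : Finset (Finset ℤ) :=
  (Finset.Icc (r j) (d j - p j + 1)).image fun a => Finset.Icc a (a + p j - 1)

/-- `J(P)`: jobs each of whose possessions meets `P`. -/
noncomputable def Jset {ι : Type*} [Fintype ι]
    (ℛ : ι → Finset (Finset ℤ)) (P : Finset ℤ) : Finset ι :=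
  Finset.univ.filter fun j => ∀ S ∈ ℛ j, (S ∩ P).Nonempty

/-- `R(X,P)`: paths of `P` to the right of all paths of `X`. -/
noncomputable def Rpart (X P : Finset ℤ) : Finset ℤ := P.filter fun i => ∀ x ∈ X, x < i

/-- `L(X,P)`: paths of `P` to the left of all paths of `X`. -/
noncomputable def Lpart (X P : Finset ℤ) : Finset ℤ := P.filter fun i => ∀ x ∈ X, i < x

/-- `J_R(X,P)`. -/
noncomputable def JRight {ι : Type*} [Fintype ι]
    (ℛ : ι → Finset (Finset ℤ)) (X P : Finset ℤ) : Finset ι :=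
  (Jset ℛ (P \ X)).filter fun j => ∀ Y ∈ ℛ j, (Y ∩ P) \ X ⊆ Rpart X P

/-- `J_L(X,P)`. -/
noncomputable def JLeft {ι : Type*} [Fintype ι]
    (ℛ : ι → Finset (Finset ℤ)) (X P : Finset ℤ) : Finset ι :=
  (Jset ℛ (P \ X)).filter fun j => ∀ Y ∈ ℛ j, (Y ∩ P) \ X ⊆ Lpart X P

section JobSets

variable {ι : Type*} [Fintype ι] (ℛ : ι → Finset (Finset ℤ))

theorem Jset_mono {P Q : Finset ℤ} (h : P ⊆ Q) : Jset ℛ P ⊆ Jset ℛ Q := by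
  intro j hj
  simp only [Jset, mem_filter, mem_univ, true_and] at hj ⊢
  exact fun S hS => (hj S hS).mono (inter_subset_inter_left h)

theorem notMem_Jset_sdiff_of_subset {X P S : Finset ℤ} {j : ι} (hS : S ∈ ℛ j) (hSX : S ⊆ X) :
    j ∉ Jset ℛ (P \ X) := by
  simp only [Jset, mem_filter, mem_univ, true_and, not_forall]
  refine ⟨S, hS, ?_⟩
  rintro ⟨y, hy⟩
  simp only [mem_inter, mem_sdiff] at hy
  exact hy.2.2 (hSX hy.1)

theorem exists_gt_of_notMem_JLeft {a b : ℤ} {P : Finset ℤ} {j : ι}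
    (hj : j ∈ Jset ℛ (P \ Icc a b)) (hL : j ∉ JLeft ℛ (Icc a b) P) :
    ∃ Y ∈ ℛ j, ∃ y ∈ Y, b < y := by
  simp only [JLeft, mem_filter, hj, true_and, not_forall, not_subset] at hL
  obtain ⟨Y, hY, y, hy, hyL⟩ := hL
  simp only [mem_sdiff, mem_inter, mem_Icc, not_and, not_le] at hy
  simp only [Lpart, mem_filter, mem_Icc, hy.1.2, true_and, not_forall, not_lt] at hyL
  obtain ⟨x, ⟨hax, -⟩, hxy⟩ := hyL
  exact ⟨Y, hY, y, hy.1.1, hy.2 (hax.trans hxy)⟩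

theorem exists_lt_of_notMem_JRight {a b : ℤ} {P : Finset ℤ} {j : ι}
    (hj : j ∈ Jset ℛ (P \ Icc a b)) (hR : j ∉ JRight ℛ (Icc a b) P) :
    ∃ Y ∈ ℛ j, ∃ y ∈ Y, y < a := by
  simp only [JRight, mem_filter, hj, true_and, not_forall, not_subset] at hR
  obtain ⟨Y, hY, y, hy, hyR⟩ := hR
  simp only [mem_sdiff, mem_inter, mem_Icc, not_and, not_le] at hy
  simp only [Rpart, mem_filter, mem_Icc, hy.1.2, true_and, not_forall, not_lt] at hyR
  obtain ⟨x, ⟨-, hxb⟩, hyx⟩ := hyR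
  exact ⟨Y, hY, y, hy.1.1, not_le.mp fun hay => (hy.2 hay).not_ge (hyx.trans hxb)⟩

end JobSets

section Possessions

variable {ι : Type*} (r d p : ι → ℤ)

theorem mem_poss {j : ι} {S : Finset ℤ} :
    S ∈ poss r d p j ↔ ∃ a, r j ≤ a ∧ a ≤ d j - p j + 1 ∧ Icc a (a + p j - 1) = S := by
  simp only [poss, mem_image, mem_Icc, and_assoc]

theorem exists_poss_subset_Icc {a b : ℤ} {j : ι} (hlen : p j ≤ b - a + 1)
    (hleft : ∃ Y ∈ poss r d p j, ∃ y ∈ Y, y < a)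
    (hright : ∃ Y ∈ poss r d p j, ∃ y ∈ Y, b < y) :
    ∃ S ∈ poss r d p j, S ⊆ Icc a b := by
  obtain ⟨Y₁, hY₁, y₁, hy₁, hy₁a⟩ := hleft
  obtain ⟨Y₂, hY₂, y₂, hy₂, hby₂⟩ := hright
  obtain ⟨a₁, hr₁, -, rfl⟩ := (mem_poss r d p).mp hY₁
  obtain ⟨a₂, -, hd₂, rfl⟩ := (mem_poss r d p).mp hY₂
  rw [mem_Icc] at hy₁ hy₂
  refine ⟨Icc (b + 1 - p j) b, (mem_poss r d p).mpr ⟨b + 1 - p j, by omega, by omega, ?_⟩, ?_⟩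
  · congr 1; ring
  · exact Icc_subset_Icc (by omega) le_rfl

end Possessions

theorem max_length_job_is_splitting_general {ι : Type*} [Fintype ι]
    (r d p : ι → ℤ)
    (P : Finset ℤ) (j : ι)
    (hmax : ∀ j' ∈ Jset (poss r d p) P, p j' ≤ p j) :
    ∀ X ∈ poss r d p j, ∀ j'' ∈ Jset (poss r d p) (P \ X),
      j'' ∈ JLeft (poss r d p) X P ∪ JRight (poss r d p) X P := by
  intro X hX j'' hj''
  obtain ⟨a, -, -, rfl⟩ := (mem_poss r d p).mp hX
  by_contra hsplit
  rw [mem_union, not_or] at hsplit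
  have hlen : p j'' ≤ a + p j - 1 - a + 1 := by
    linarith [hmax j'' (Jset_mono _ sdiff_subset hj'')]
  obtain ⟨S, hS, hSX⟩ := exists_poss_subset_Icc r d p hlen
    (exists_lt_of_notMem_JRight _ hj'' hsplit.2) (exists_gt_of_notMem_JLeft _ hj'' hsplit.1)
  exact notMem_Jset_sdiff_of_subset _ hS hSX hj''

/-- Lemma 4 (`lem:splitting_job`): in the unidirectional problem, a job `j ∈ J(P)` of
maximal length is splitting: for every `X ∈ ℛ j`, every job of `J(P \ X)` lies in
`J_L(X,P) ∪ J_R(X,P)`. -/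
theorem max_length_job_is_splitting {ι : Type*} [Fintype ι]
    (r d p : ι → ℤ) (hp : ∀ j, 1 ≤ p j) (hfeas : ∀ j, r j + p j - 1 ≤ d j)
    (P : Finset ℤ) (j : ι) (hj : j ∈ Jset (poss r d p) P)
    (hmax : ∀ j' ∈ Jset (poss r d p) P, p j' ≤ p j) :
    ∀ X ∈ poss r d p j, ∀ j'' ∈ Jset (poss r d p) (P \ X),
      j'' ∈ JLeft (poss r d p) X P ∪ JRight (poss r d p) X P :=
  max_length_job_is_splitting_general r d p P j hmax
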